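/- The candidate grid contains a (1+ε)-approximate median: let T be a set of n point sequences in ℝ^d (with the Euclidean metric), each of complexity at most m, let p ∈ [1,∞), ε > 0, and 2 ≤ ℓ ≤ m. Let c be a point sequence attaining min over (ℝ^d)^{≤ℓ} of cost_p^1(T,·), let r* > 0 satisfy n·r* ≤ cost_p^1(T,c) ≤ 2n·r*, and set γ* = ε·r*/((2m)^{1/p}·√d). If τ_i ∈ T satisfies dtw_p(τ_i, c) ≤ (2/n)·cost_p^1(T,c), and ℬ(τ_i, 4r*) denotes the union over the vertices τ_{i,j} of τ_i of the Euclidean balls B(τ_{i,j}, 4r*), then there exists a point sequence c' of complexity at most ℓ all of whose vertices lie in 𝔾(ℬ(τ_i,4r*), γ*) such that cost_p^1(T,c') ≤ (1+ε)·cost_p^1(T,c). -/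

import Mathlib

/-!
Snap every vertex of `c` to the `γ*`-grid. A vertex moves by at most
`γ*·√d`, and a warping of `c` against a sequence of complexity at most `m` has at most `2m`
pairs, so by Minkowski's inequality each `dtw_p(c, τ)` grows by at most
`(2m)^{1/p}·γ*·√d = ε·r*`; summed over the `n` sequences this is `n·ε·r* ≤ ε·cost_p^1(T, c)`.
The snapped vertices lie in `𝔾(ℬ(τᵢ, 4r*), γ*)`: every warping matches each vertex of `c` with
some vertex of `τᵢ`, so `dtw_p(τᵢ, c) ≤ 4r*` puts each vertex of `c` within `4r*` of `τᵢ`.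
-/

open scoped BigOperators

/-- An `(m₁, m₂)`-warping (with 0-based indices): a sequence of index pairs starting at
`(0,0)`, ending at `(m₁-1, m₂-1)`, whose consecutive increments lie in
`{(0,1), (1,0), (1,1)}`. -/
def IsWarping (m₁ m₂ : ℕ) (W : List (ℕ × ℕ)) : Prop :=
  W ≠ [] ∧ W.head? = some (0, 0) ∧ W.getLast? = some (m₁ - 1, m₂ - 1) ∧
    ∀ k, k + 1 < W.length →
      W.getD (k + 1) (0, 0) = ((W.getD k (0, 0)).1, (W.getD k (0, 0)).2 + 1) ∨
      W.getD (k + 1) (0, 0) = ((W.getD k (0, 0)).1 + 1, (W.getD k (0, 0)).2) ∨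
      W.getD (k + 1) (0, 0) = ((W.getD k (0, 0)).1 + 1, (W.getD k (0, 0)).2 + 1)

/-- The cost `Σ_{(i,j) ∈ W} ρ(σ_i, τ_j)^p` of a warping `W`. -/
noncomputable def warpCost {X : Type*} [MetricSpace X] [Inhabited X]
    (p : ℝ) (σ τ : List X) (W : List (ℕ × ℕ)) : ℝ :=
  (W.map fun ij => dist (σ.getD ij.1 default) (τ.getD ij.2 default) ^ p).sum

/-- The `p`-dynamic time warping distance between two point sequences. -/
noncomputable def dtw {X : Type*} [MetricSpace X] [Inhabited X] (p : ℝ) (σ τ : List X) : ℝ :=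
  sInf { c : ℝ | ∃ W, IsWarping σ.length τ.length W ∧ c = warpCost p σ τ W ^ (1 / p) }

/-- `cost_p^q(T, c) = Σ_{τ ∈ T} dtw_p(c, τ)^q`. -/
noncomputable def dtwCost {X : Type*} [MetricSpace X] [Inhabited X]
    (p q : ℝ) (T : Finset (List X)) (c : List X) : ℝ :=
  ∑ τ ∈ T, dtw p c τ ^ q

/-- `σ` is a point sequence of complexity at most `ℓ`, i.e. `σ ∈ X^{≤ℓ}`. -/
def SeqLE {X : Type*} (ℓ : ℕ) (σ : List X) : Prop := 2 ≤ σ.length ∧ σ.length ≤ ℓ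

/-- The `γ`-grid-point of `x ∈ ℝ^d`. -/
noncomputable def gridPt (d : ℕ) (γ : ℝ) (x : EuclideanSpace ℝ (Fin d)) :
    EuclideanSpace ℝ (Fin d) :=
  WithLp.toLp 2 (fun i => (⌊x i / γ⌋ : ℝ) * γ)

/-- The grid of cell width `γ` covering `P ⊆ ℝ^d`. -/
noncomputable def gridOf (d : ℕ) (P : Set (EuclideanSpace ℝ (Fin d))) (γ : ℝ) :
    Set (EuclideanSpace ℝ (Fin d)) :=
  gridPt d γ '' P

theorem Nat.exists_eq_of_le_succ {f : ℕ → ℕ} {K j : ℕ} (h0 : f 0 = 0)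
    (hf : ∀ k < K, f (k + 1) ≤ f k + 1) (hj : j ≤ f K) : ∃ k ≤ K, f k = j := by
  induction K with
  | zero => exact ⟨0, le_rfl, by omega⟩
  | succ K ih =>
    by_cases hjK : j ≤ f K
    · obtain ⟨k, hk, rfl⟩ := ih (fun k hk => hf k (by omega)) hjK
      exact ⟨k, by omega, rfl⟩
    · exact ⟨K + 1, le_rfl, by have := hf K (by omega); omega⟩

namespace IsWarping

variable {m₁ m₂ : ℕ} {W : List (ℕ × ℕ)}

local notation "pt" W:max k:max => List.getD W k (0, 0)

theorem length_pos (hW : IsWarping m₁ m₂ W) : 0 < W.length :=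
  List.length_pos_iff.mpr hW.1

theorem getD_zero (hW : IsWarping m₁ m₂ W) : pt W 0 = (0, 0) := by
  obtain ⟨hne, hhead, -, -⟩ := hW
  cases W with
  | nil => exact absurd rfl hne
  | cons a l => simpa using hhead

theorem getD_length_sub_one (hW : IsWarping m₁ m₂ W) :
    pt W (W.length - 1) = (m₁ - 1, m₂ - 1) := by
  have hlast := hW.2.2.1
  rw [List.getLast?_eq_some_getLast hW.1, List.getLast_eq_getElem] at hlast
  rw [List.getD_eq_getElem _ _ (by have := hW.length_pos; omega)]
  simpa using hlast

theorem step (hW : IsWarping m₁ m₂ W) {k : ℕ} (hk : k + 1 < W.length) :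
    (pt W k).1 ≤ (pt W (k + 1)).1 ∧ (pt W (k + 1)).2 ≤ (pt W k).2 + 1 ∧
      (pt W k).1 + (pt W k).2 + 1 ≤ (pt W (k + 1)).1 + (pt W (k + 1)).2 := by
  rcases hW.2.2.2 k hk with h | h | h <;> rw [h] <;> omega

theorem le_fst_add_snd (hW : IsWarping m₁ m₂ W) {k : ℕ} (hk : k < W.length) :
    k ≤ (pt W k).1 + (pt W k).2 := by
  induction k with
  | zero => omega
  | succ k ih => have := (hW.step hk).2.2; have := ih (by omega); omega

theorem length_le (hW : IsWarping m₁ m₂ W) (h₁ : 1 ≤ m₁) (h₂ : 1 ≤ m₂) :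
    W.length ≤ m₁ + m₂ - 1 := by
  have h := hW.le_fst_add_snd (k := W.length - 1) (by have := hW.length_pos; omega)
  rw [hW.getD_length_sub_one] at h
  omega

theorem fst_le (hW : IsWarping m₁ m₂ W) {k : ℕ} (hk : k < W.length) : (pt W k).1 ≤ m₁ - 1 := by
  suffices ∀ j, k + j < W.length → (pt W k).1 ≤ (pt W (k + j)).1 by
    have h := this (W.length - 1 - k) (by omega)
    rwa [show k + (W.length - 1 - k) = W.length - 1 by omega, hW.getD_length_sub_one] at h
  intro j
  induction j with
  | zero => simp
  | succ j ih => intro hj; exact (ih (by omega)).trans (hW.step (k := k + j) hj).1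

theorem exists_snd_eq (hW : IsWarping m₁ m₂ W) {j : ℕ} (hj : j < m₂) :
    ∃ k < W.length, (pt W k).2 = j := by
  have hpos := hW.length_pos
  have hlast := congrArg Prod.snd hW.getD_length_sub_one
  obtain ⟨k, hk, hkj⟩ := Nat.exists_eq_of_le_succ (f := fun k => (pt W k).2)
    (K := W.length - 1) (congrArg Prod.snd hW.getD_zero) (fun k hk => (hW.step (by omega)).2.1)
    (show j ≤ (pt W (W.length - 1)).2 by omega)
  exact ⟨k, by omega, hkj⟩

end IsWarping

def staircaseWarping (m₁ m₂ : ℕ) : List (ℕ × ℕ) :=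
  (List.range (m₁ + m₂ - 1)).map fun k => (min k (m₁ - 1), k - min k (m₁ - 1))

theorem getD_staircaseWarping {m₁ m₂ k : ℕ} (hk : k < m₁ + m₂ - 1) :
    (staircaseWarping m₁ m₂).getD k (0, 0) = (min k (m₁ - 1), k - min k (m₁ - 1)) := by
  rw [List.getD_eq_getElem _ _ (by simpa [staircaseWarping] using hk)]
  simp [staircaseWarping]

theorem isWarping_staircaseWarping {m₁ m₂ : ℕ} (h₁ : 1 ≤ m₁) (h₂ : 1 ≤ m₂) :
    IsWarping m₁ m₂ (staircaseWarping m₁ m₂) := by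
  have hlen : (staircaseWarping m₁ m₂).length = m₁ + m₂ - 1 := by simp [staircaseWarping]
  have hne : staircaseWarping m₁ m₂ ≠ [] := List.ne_nil_of_length_pos (by omega)
  refine ⟨hne, ?_, ?_, fun k hk => ?_⟩
  · simp [staircaseWarping, List.head?_range]; omega
  · rw [List.getLast?_eq_getElem?, hlen, List.getElem?_eq_getElem (by omega),
      ← List.getD_eq_getElem (d := (0, 0)), getD_staircaseWarping (by omega)]
    simp only [Option.some.injEq, Prod.mk.injEq]
    omega
  · rw [hlen] at hk
    rw [getD_staircaseWarping (by omega), getD_staircaseWarping (by omega)]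
    simp only [Prod.ext_iff]
    omega

section DTW

variable {X : Type*} [MetricSpace X] [Inhabited X] {p : ℝ} {σ τ : List X} {W : List (ℕ × ℕ)}

theorem warpCost_nonneg : 0 ≤ warpCost p σ τ W :=
  List.sum_nonneg fun _ hx => by
    obtain ⟨_, -, rfl⟩ := List.mem_map.mp hx
    exact Real.rpow_nonneg dist_nonneg p

theorem warpCost_eq_sum_fin :
    warpCost p σ τ W =
      ∑ k : Fin W.length, dist (σ.getD W[k].1 default) (τ.getD W[k].2 default) ^ p := by
  rw [warpCost, ← List.sum_ofFn]
  conv_lhs => rw [← List.ofFn_getElem (xs := W), List.map_ofFn]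
  rfl

theorem dist_rpow_le_warpCost {k : ℕ} (hk : k < W.length) :
    dist (σ.getD (W.getD k (0, 0)).1 default) (τ.getD (W.getD k (0, 0)).2 default) ^ p ≤
      warpCost p σ τ W := by
  refine List.single_le_sum (fun _ hx => ?_) _ (List.mem_map_of_mem ?_)
  · obtain ⟨_, -, rfl⟩ := List.mem_map.mp hx
    exact Real.rpow_nonneg dist_nonneg p
  · rw [List.getD_eq_getElem _ _ hk]
    exact List.getElem_mem hk

theorem dtw_le_warpCost_rpow (hW : IsWarping σ.length τ.length W) :
    dtw p σ τ ≤ warpCost p σ τ W ^ (1 / p) :=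
  csInf_le ⟨0, by rintro _ ⟨W, -, rfl⟩; exact Real.rpow_nonneg warpCost_nonneg _⟩ ⟨W, hW, rfl⟩

theorem le_dtw {a : ℝ} (hσ : σ ≠ []) (hτ : τ ≠ [])
    (h : ∀ W, IsWarping σ.length τ.length W → a ≤ warpCost p σ τ W ^ (1 / p)) :
    a ≤ dtw p σ τ :=
  le_csInf ⟨_, _, isWarping_staircaseWarping (List.length_pos_iff.mpr hσ)
    (List.length_pos_iff.mpr hτ), rfl⟩ fun _ ⟨W, hW, hb⟩ => hb ▸ h W hW

/-- Every warping matches `τ_j` with some vertex of `σ`, and there are only finitely many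
candidates, so the nearest vertex of `σ` is within `dtw p σ τ` of `τ_j`. -/
theorem exists_dist_getD_le_dtw (hp : 0 < p) (hσ : σ ≠ []) {j : ℕ} (hj : j < τ.length) :
    ∃ i < σ.length, dist (σ.getD i default) (τ.getD j default) ≤ dtw p σ τ := by
  have hrange : (Finset.range σ.length).Nonempty :=
    Finset.nonempty_range_iff.mpr (List.length_pos_iff.mpr hσ).ne'
  obtain ⟨i, hi, hmin⟩ := Finset.exists_mem_eq_inf' hrange
    fun i => dist (σ.getD i default) (τ.getD j default)
  refine ⟨i, Finset.mem_range.mp hi, hmin ▸ le_dtw hσ (List.ne_nil_of_length_pos (by omega))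
    fun W hW => ?_⟩
  obtain ⟨k, hk, rfl⟩ := hW.exists_snd_eq hj
  have hfst : (W.getD k (0, 0)).1 < σ.length := by
    have := hW.fst_le hk; have := List.length_pos_iff.mpr hσ; omega
  calc _ ≤ dist (σ.getD (W.getD k (0, 0)).1 default) (τ.getD (W.getD k (0, 0)).2 default) :=
        Finset.inf'_le _ (Finset.mem_range.mpr hfst)
    _ = (dist (σ.getD (W.getD k (0, 0)).1 default)
          (τ.getD (W.getD k (0, 0)).2 default) ^ p) ^ (1 / p) := by
        rw [one_div, Real.rpow_rpow_inv dist_nonneg hp.ne']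
    _ ≤ warpCost p σ τ W ^ (1 / p) :=
        Real.rpow_le_rpow (Real.rpow_nonneg dist_nonneg p) (dist_rpow_le_warpCost hk)
          (by positivity)

theorem mem_biUnion_closedBall_of_dtw_le (hp : 0 < p) (hσ : σ ≠ []) {R : ℝ}
    (hR : dtw p σ τ ≤ R) {x : X} (hx : x ∈ τ) :
    x ∈ ⋃ y ∈ {y | y ∈ σ}, Metric.closedBall y R := by
  obtain ⟨j, hj, rfl⟩ := List.getElem_of_mem hx
  obtain ⟨i, hi, hdist⟩ := exists_dist_getD_le_dtw hp hσ hj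
  refine Set.mem_biUnion (List.getElem_mem hi) ?_
  rw [Metric.mem_closedBall, dist_comm]
  simpa only [List.getD_eq_getElem _ _ hi, List.getD_eq_getElem _ _ hj] using hdist.trans hR

end DTW

section Perturbation

variable {X : Type*} [MetricSpace X] [Inhabited X] {p δ : ℝ} {f : X → X} {σ τ : List X}

theorem dist_getD_map_le (hδ : 0 ≤ δ) (hf : ∀ x ∈ σ, dist (f x) x ≤ δ) (i : ℕ) (y : X) :
    dist ((σ.map f).getD i default) y ≤ dist (σ.getD i default) y + δ := by
  rcases lt_or_ge i σ.length with hi | hi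
  · rw [List.getD_eq_getElem _ _ (by simpa using hi), List.getD_eq_getElem _ _ hi,
      List.getElem_map]
    linarith [hf _ (List.getElem_mem hi), dist_triangle (f σ[i]) σ[i] y]
  · rw [List.getD_eq_default _ _ (by simpa using hi), List.getD_eq_default _ _ hi]
    linarith

theorem warpCost_map_rpow_le (hp : 1 ≤ p) (hδ : 0 ≤ δ) (hf : ∀ x ∈ σ, dist (f x) x ≤ δ)
    (W : List (ℕ × ℕ)) :
    warpCost p (σ.map f) τ W ^ (1 / p) ≤
      warpCost p σ τ W ^ (1 / p) + (W.length : ℝ) ^ (1 / p) * δ := by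
  have hp0 : 0 < p := by linarith
  calc warpCost p (σ.map f) τ W ^ (1 / p)
      ≤ (∑ k : Fin W.length,
          (dist (σ.getD W[k].1 default) (τ.getD W[k].2 default) + δ) ^ p) ^ (1 / p) := by
        rw [warpCost_eq_sum_fin]
        gcongr with k
        exact dist_getD_map_le hδ hf _ _
    _ ≤ (∑ k : Fin W.length, dist (σ.getD W[k].1 default) (τ.getD W[k].2 default) ^ p) ^ (1 / p)
          + (∑ _k : Fin W.length, δ ^ p) ^ (1 / p) :=
        Real.Lp_add_le_of_nonneg _ hp (fun _ _ => dist_nonneg) (fun _ _ => hδ)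
    _ = warpCost p σ τ W ^ (1 / p) + (W.length : ℝ) ^ (1 / p) * δ := by
        rw [warpCost_eq_sum_fin, Finset.sum_const, Finset.card_univ, Fintype.card_fin,
          nsmul_eq_mul, Real.mul_rpow (Nat.cast_nonneg _) (Real.rpow_nonneg hδ _), one_div,
          Real.rpow_rpow_inv hδ hp0.ne']

theorem dtw_map_le (hp : 1 ≤ p) (hδ : 0 ≤ δ) (hf : ∀ x ∈ σ, dist (f x) x ≤ δ)
    (hσ : σ ≠ []) (hτ : τ ≠ []) {M : ℕ} (hM : σ.length + τ.length - 1 ≤ M) :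
    dtw p (σ.map f) τ ≤ dtw p σ τ + (M : ℝ) ^ (1 / p) * δ := by
  suffices dtw p (σ.map f) τ - (M : ℝ) ^ (1 / p) * δ ≤ dtw p σ τ by linarith
  refine le_dtw hσ hτ fun W hW => ?_
  have hlen : (W.length : ℝ) ^ (1 / p) ≤ (M : ℝ) ^ (1 / p) := by
    have := hW.length_le (List.length_pos_iff.mpr hσ) (List.length_pos_iff.mpr hτ)
    gcongr
    exact_mod_cast this.trans hM
  have hdtw : dtw p (σ.map f) τ ≤ warpCost p (σ.map f) τ W ^ (1 / p) :=
    dtw_le_warpCost_rpow (by rwa [List.length_map])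
  linarith [warpCost_map_rpow_le (τ := τ) hp hδ hf W, mul_le_mul_of_nonneg_right hlen hδ]

theorem dtwCost_one_map_le (hp : 1 ≤ p) (hδ : 0 ≤ δ) (hf : ∀ x ∈ σ, dist (f x) x ≤ δ)
    (hσ : σ ≠ []) {T : Finset (List X)} (hT : ∀ τ ∈ T, τ ≠ []) {M : ℕ}
    (hM : ∀ τ ∈ T, σ.length + τ.length - 1 ≤ M) :
    dtwCost p 1 T (σ.map f) ≤ dtwCost p 1 T σ + T.card * ((M : ℝ) ^ (1 / p) * δ) := by
  simp only [dtwCost, Real.rpow_one]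
  calc ∑ τ ∈ T, dtw p (σ.map f) τ ≤ ∑ τ ∈ T, (dtw p σ τ + (M : ℝ) ^ (1 / p) * δ) :=
        Finset.sum_le_sum fun τ hτ => dtw_map_le hp hδ hf hσ (hT τ hτ) (hM τ hτ)
    _ = _ := by rw [Finset.sum_add_distrib, Finset.sum_const, nsmul_eq_mul]

end Perturbation

theorem abs_floor_div_mul_sub_le {γ : ℝ} (hγ : 0 < γ) (t : ℝ) : |⌊t / γ⌋ * γ - t| ≤ γ := by
  rw [abs_le]
  constructor <;> linarith [Int.sub_floor_div_mul_nonneg t hγ, Int.sub_floor_div_mul_lt t hγ]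

theorem dist_gridPt_le {d : ℕ} {γ : ℝ} (hγ : 0 < γ) (x : EuclideanSpace ℝ (Fin d)) :
    dist (gridPt d γ x) x ≤ γ * Real.sqrt d := by
  rw [EuclideanSpace.dist_eq]
  calc Real.sqrt (∑ i, dist (gridPt d γ x i) (x i) ^ 2) ≤ Real.sqrt (∑ _i : Fin d, γ ^ 2) := by
        gcongr with i
        exact abs_floor_div_mul_sub_le hγ (x i)
    _ = γ * Real.sqrt d := by
        rw [Finset.sum_const, Finset.card_univ, Fintype.card_fin, nsmul_eq_mul,
          Real.sqrt_mul (Nat.cast_nonneg _), Real.sqrt_sq hγ.le, mul_comm]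

theorem map_gridPt_mem_gridOf {d : ℕ} {γ : ℝ} {P : Set (EuclideanSpace ℝ (Fin d))}
    {c : List (EuclideanSpace ℝ (Fin d))} (hc : ∀ x ∈ c, x ∈ P) :
    ∀ v ∈ c.map (gridPt d γ), v ∈ gridOf d P γ := by
  simpa only [List.forall_mem_map] using fun x hx => ⟨x, hc x hx, rfl⟩

theorem candidate_grid_contains_approx_median_general (d : ℕ) (hd : 1 ≤ d)
    (T : Finset (List (EuclideanSpace ℝ (Fin d)))) (n m ℓ : ℕ)
    (hn : T.card = n)
    (hm : ∀ τ ∈ T, 2 ≤ τ.length ∧ τ.length ≤ m)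
    (hℓm : ℓ ≤ m)
    (p : ℝ) (hp : 1 ≤ p) (ε : ℝ) (hε : 0 < ε)
    (c : List (EuclideanSpace ℝ (Fin d))) (hc : SeqLE ℓ c)
    (rs : ℝ) (hrs : 0 < rs)
    (hr1 : (n : ℝ) * rs ≤ dtwCost p 1 T c) (hr2 : dtwCost p 1 T c ≤ 2 * n * rs)
    (τi : List (EuclideanSpace ℝ (Fin d))) (hτi : τi ∈ T)
    (hclose : dtw p τi c ≤ (2 / (n : ℝ)) * dtwCost p 1 T c) :
    ∃ c' : List (EuclideanSpace ℝ (Fin d)), SeqLE ℓ c' ∧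
      (∀ v ∈ c', v ∈ gridOf d (⋃ x ∈ {x | x ∈ τi}, Metric.closedBall x (4 * rs))
        (ε * rs / ((2 * (m : ℝ)) ^ (1 / p) * Real.sqrt d))) ∧
      dtwCost p 1 T c' ≤ (1 + ε) * dtwCost p 1 T c := by
  have hT : ∀ τ ∈ T, τ ≠ [] := fun τ hτ => List.ne_nil_of_length_pos (by linarith [hm τ hτ])
  have hc0 : c ≠ [] := List.ne_nil_of_length_pos (by linarith [hc.1])
  have hn0 : (0 : ℝ) < n := by rw [← hn]; exact_mod_cast Finset.card_pos.mpr ⟨τi, hτi⟩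
  have hm0 : (0 : ℝ) < m := by have := hm τi hτi; exact_mod_cast (show 0 < m by omega)
  have hd0 : (0 : ℝ) < d := by exact_mod_cast hd
  set γ := ε * rs / ((2 * (m : ℝ)) ^ (1 / p) * Real.sqrt d) with hγ_def
  have hγ : 0 < γ := by positivity
  have hτi_close : dtw p τi c ≤ 4 * rs := by
    calc dtw p τi c ≤ 2 / n * (2 * n * rs) := hclose.trans (by gcongr)
      _ = 4 * rs := by field_simp; ring
  refine ⟨c.map (gridPt d γ), by simpa only [SeqLE, List.length_map] using hc,
    map_gridPt_mem_gridOf fun x hx =>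
      mem_biUnion_closedBall_of_dtw_le (by linarith) (hT τi hτi) hτi_close hx, ?_⟩
  calc dtwCost p 1 T (c.map (gridPt d γ))
      ≤ dtwCost p 1 T c + n * (((2 * m : ℕ) : ℝ) ^ (1 / p) * (γ * Real.sqrt d)) := by
        rw [← hn]
        refine dtwCost_one_map_le hp (by positivity) (fun x _ => dist_gridPt_le hγ x) hc0 hT
          fun τ hτ => ?_
        have := hm τ hτ
        have := hc.2
        omega
    _ = dtwCost p 1 T c + ε * (n * rs) := by
        rw [hγ_def]
        push_cast
        field_simp
    _ ≤ (1 + ε) * dtwCost p 1 T c := by linarith [mul_le_mul_of_nonneg_left hr1 hε.le]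

/-- **The candidate grid contains a `(1+ε)`-approximate median**
(Lemma `lemma:correctnessapproxscheme` ii): under the same assumptions as part i), there is
a point sequence `c'` of complexity at most `ℓ` with all vertices in
`𝔾(ℬ(τᵢ,4r*), γ*)` such that `cost_p^1(T,c') ≤ (1+ε)·cost_p^1(T,c)`. -/
theorem candidate_grid_contains_approx_median (d : ℕ) (hd : 1 ≤ d)
    (T : Finset (List (EuclideanSpace ℝ (Fin d)))) (n m ℓ : ℕ)
    (hn : T.card = n) (hn0 : 0 < n)
    (hm : ∀ τ ∈ T, 2 ≤ τ.length ∧ τ.length ≤ m)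
    (hℓ2 : 2 ≤ ℓ) (hℓm : ℓ ≤ m)
    (p : ℝ) (hp : 1 ≤ p) (ε : ℝ) (hε : 0 < ε)
    (c : List (EuclideanSpace ℝ (Fin d))) (hc : SeqLE ℓ c)
    (hcopt : ∀ c' : List (EuclideanSpace ℝ (Fin d)), SeqLE ℓ c' →
      dtwCost p 1 T c ≤ dtwCost p 1 T c')
    (rs : ℝ) (hrs : 0 < rs)
    (hr1 : (n : ℝ) * rs ≤ dtwCost p 1 T c) (hr2 : dtwCost p 1 T c ≤ 2 * n * rs)
    (τi : List (EuclideanSpace ℝ (Fin d))) (hτi : τi ∈ T)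
    (hclose : dtw p τi c ≤ (2 / (n : ℝ)) * dtwCost p 1 T c) :
    ∃ c' : List (EuclideanSpace ℝ (Fin d)), SeqLE ℓ c' ∧
      (∀ v ∈ c', v ∈ gridOf d (⋃ x ∈ {x | x ∈ τi}, Metric.closedBall x (4 * rs))
        (ε * rs / ((2 * (m : ℝ)) ^ (1 / p) * Real.sqrt d))) ∧
      dtwCost p 1 T c' ≤ (1 + ε) * dtwCost p 1 T c :=
  candidate_grid_contains_approx_median_general d hd T n m ℓ hn hm hℓm p hp ε hε c hc rs hrs hr1 hr2
    τi hτi hclose
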